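/- For all t > 0, R > 0 and r ≥ 0: ∫_ℝ ∫_ℝ φ_{t,R}(r,y)² · φ_{t,R}(r,y')² · G_{2r}(y−y') dy dy' ≤ 4 t⁵ R. -/

import Mathlib

open MeasureTheory

/-- `G_t(x)`, the fundamental solution of the wave equation on `ℝ₊ × ℝ`:
`G_t(x) = 1/2` if `|x| < t`, and `0` otherwise (in particular `G_t ≡ 0` for `t ≤ 0`). -/
noncomputable def waveG (t x : ℝ) : ℝ := if |x| < t then 1 / 2 else 0

/-- `φ_{t,R}(r,y) = ∫_{−R}^{R} G_{t−r}(x−y) dx`. -/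
noncomputable def phiTR (t R r y : ℝ) : ℝ := ∫ x in (-R)..R, waveG (t - r) (x - y)

lemma waveG_nonneg (a z : ℝ) : 0 ≤ waveG a z := by
  unfold waveG; split <;> norm_num

lemma waveG_eq (a u v : ℝ) :
    waveG a (u - v) = Set.indicator (Set.Ioo (u - a) (u + a)) (fun _ => (1/2:ℝ)) v := by
  unfold waveG
  by_cases h : |u - v| < a
  · rw [if_pos h, Set.indicator_of_mem]
    rw [abs_lt] at h
    rw [Set.mem_Ioo]
    constructor <;> linarith [h.1, h.2]
  · rw [if_neg h, Set.indicator_of_notMem]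
    rw [abs_lt] at h
    rw [Set.mem_Ioo]
    intro hc
    exact h ⟨by linarith [hc.1, hc.2], by linarith [hc.1, hc.2]⟩

lemma waveG_comm (a u v : ℝ) : waveG a (u - v) = waveG a (v - u) := by
  unfold waveG; rw [abs_sub_comm]

lemma phi_formula (t R r y : ℝ) (hR : 0 ≤ R) :
    phiTR t R r y = 1/2 * max (min (y + (t - r)) R - max (y - (t - r)) (-R)) 0 := by
  have hRR : (-R) ≤ R := by linarith
  have h1 : ∀ x : ℝ, waveG (t - r) (x - y)
      = Set.indicator (Set.Ioo (y - (t-r)) (y + (t-r))) (fun _ => (1/2:ℝ)) x := by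
    intro x
    rw [waveG_comm, waveG_eq]
  unfold phiTR
  rw [intervalIntegral.integral_of_le hRR]
  simp_rw [h1]
  rw [MeasureTheory.setIntegral_indicator measurableSet_Ioo, MeasureTheory.setIntegral_const]
  have hvol : volume (Set.Ioc (-R) R ∩ Set.Ioo (y - (t-r)) (y + (t-r)))
      = ENNReal.ofReal (min (y + (t-r)) R - max (y - (t-r)) (-R)) := by
    apply le_antisymm
    · have hsub : Set.Ioc (-R) R ∩ Set.Ioo (y - (t-r)) (y + (t-r))
          ⊆ Set.Icc (max (y - (t-r)) (-R)) (min (y + (t-r)) R) := by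
        rintro x ⟨⟨hx1, hx2⟩, hx3, hx4⟩
        exact ⟨(max_lt hx3 hx1).le, le_min hx4.le hx2⟩
      calc volume (Set.Ioc (-R) R ∩ Set.Ioo (y - (t-r)) (y + (t-r)))
          ≤ volume (Set.Icc (max (y - (t-r)) (-R)) (min (y + (t-r)) R)) := measure_mono hsub
        _ = ENNReal.ofReal (min (y + (t-r)) R - max (y - (t-r)) (-R)) := Real.volume_Icc
    · rw [← Real.volume_Ioo]
      apply measure_mono
      rintro x ⟨hx1, hx2⟩
      refine ⟨⟨lt_of_le_of_lt (le_max_right _ _) hx1, (lt_of_lt_of_le hx2 (min_le_right _ _)).le⟩,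
        lt_of_le_of_lt (le_max_left _ _) hx1, lt_of_lt_of_le hx2 (min_le_left _ _)⟩
  rw [measureReal_def, hvol, ENNReal.toReal_ofReal', smul_eq_mul]
  ring

/-- for `t > 0`, `R > 0`, `r ≥ 0`,
`∫_ℝ ∫_ℝ φ_{t,R}(r,y)²·φ_{t,R}(r,y')²·G_{2r}(y−y') dy dy' ≤ 4 t⁵ R`. -/
theorem stmt15 (t R r : ℝ) (ht : 0 < t) (hR : 0 < R) (hr : 0 ≤ r) :
    (∫ y : ℝ, ∫ y' : ℝ, phiTR t R r y ^ 2 * phiTR t R r y' ^ 2 * waveG (2 * r) (y - y'))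
      ≤ 4 * t ^ 5 * R := by
  by_cases hrt : t ≤ r
  · -- here `t - r ≤ 0` so `φ ≡ 0` and the LHS vanishes
    have hphi : ∀ y, phiTR t R r y = 0 := by
      intro y
      unfold phiTR
      have h0 : ∀ x : ℝ, waveG (t - r) (x - y) = 0 := by
        intro x
        unfold waveG
        rw [if_neg]
        intro h
        linarith [abs_nonneg (x - y)]
      simp [h0]
    simp only [hphi]
    simp
    positivity
  · push_neg at hrt
    set s := t - r with hs
    have hs0 : 0 < s := by simp [hs]; linarith
    have hst : s ≤ t := by simp [hs]; linarith
    -- basic bounds on φ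
    have hnn : ∀ y, 0 ≤ phiTR t R r y := by
      intro y
      rw [phi_formula t R r y hR.le]
      have := le_max_right (min (y + (t-r)) R - max (y - (t-r)) (-R)) (0:ℝ)
      linarith
    have hφs : ∀ y, phiTR t R r y ≤ s := by
      intro y
      rw [phi_formula t R r y hR.le]
      have h1 := min_le_left (y + (t-r)) R
      have h2 := le_max_left (y - (t-r)) (-R)
      have : max (min (y + (t-r)) R - max (y - (t-r)) (-R)) 0 ≤ 2*s := by
        apply max_le _ (by linarith)
        simp only [hs]
        linarith
      linarith
    have hφR : ∀ y, phiTR t R r y ≤ R := by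
      intro y
      rw [phi_formula t R r y hR.le]
      have h1 := min_le_right (y + (t-r)) R
      have h2 := le_max_right (y - (t-r)) (-R)
      have : max (min (y + (t-r)) R - max (y - (t-r)) (-R)) 0 ≤ 2*R := by
        apply max_le _ (by linarith)
        linarith
      linarith
    have hφt : ∀ y, phiTR t R r y ≤ t := fun y => le_trans (hφs y) hst
    have hsupp : ∀ y : ℝ, y ∉ Set.Icc (-(R+s)) (R+s) → phiTR t R r y = 0 := by
      intro y hy
      rw [phi_formula t R r y hR.le]
      rw [Set.mem_Icc, not_and_or] at hy
      have hd : min (y + (t-r)) R - max (y - (t-r)) (-R) ≤ 0 := by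
        rcases hy with hy | hy
        · push_neg at hy
          have h1 := min_le_left (y + (t-r)) R
          have h2 := le_max_right (y - (t-r)) (-R)
          simp only [hs] at hy
          linarith
        · push_neg at hy
          have h1 := min_le_right (y + (t-r)) R
          have h2 := le_max_left (y - (t-r)) (-R)
          simp only [hs] at hy
          linarith
      rw [max_eq_right hd]
      ring
    -- continuity and integrability
    have hcont : Continuous (fun y => phiTR t R r y) := by
      have heq : (fun y => phiTR t R r y)
          = fun y => 1/2 * max (min (y + (t - r)) R - max (y - (t - r)) (-R)) 0 := by
        funext y; exact phi_formula t R r y hR.le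
      rw [heq]
      fun_prop
    have hCS : HasCompactSupport (fun y => phiTR t R r y) :=
      HasCompactSupport.intro isCompact_Icc hsupp
    have hint : Integrable (fun y => phiTR t R r y) :=
      hcont.integrable_of_hasCompactSupport hCS
    have hint2 : Integrable (fun y => phiTR t R r y ^ 2) := by
      apply (hcont.pow 2).integrable_of_hasCompactSupport
      apply HasCompactSupport.intro isCompact_Icc
      intro x hx
      show phiTR t R r x ^ 2 = 0
      rw [hsupp x hx]
      ring
    -- the G-integral
    have hGind : ∀ y y' : ℝ, waveG (2*r) (y - y')
        = Set.indicator (Set.Ioo (y - 2*r) (y + 2*r)) (fun _ => (1/2:ℝ)) y' :=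
      fun y y' => waveG_eq (2*r) y y'
    have hGint : ∀ y : ℝ, Integrable (fun y' => waveG (2*r) (y - y')) := by
      intro y
      simp_rw [hGind y]
      apply MeasureTheory.IntegrableOn.integrable_indicator _ measurableSet_Ioo
      refine MeasureTheory.integrableOn_const ?_
      rw [Real.volume_Ioo]
      exact ENNReal.ofReal_ne_top
    have hGval : ∀ y : ℝ, (∫ y' : ℝ, waveG (2*r) (y - y')) = 2*r := by
      intro y
      simp_rw [hGind y]
      rw [MeasureTheory.integral_indicator_const _ measurableSet_Ioo, measureReal_def, Real.volume_Ioo]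
      have h4 : y + 2*r - (y - 2*r) = 4*r := by ring
      rw [h4, ENNReal.toReal_ofReal (by linarith), smul_eq_mul]
      ring
    -- key pointwise bound on the inner integral
    have key : ∀ y : ℝ,
        (∫ y' : ℝ, phiTR t R r y ^ 2 * phiTR t R r y' ^ 2 * waveG (2*r) (y - y'))
          ≤ 2*r*t^2 * phiTR t R r y ^ 2 := by
      intro y
      have heq : (fun y' => phiTR t R r y ^ 2 * phiTR t R r y' ^ 2 * waveG (2*r) (y - y'))
          = fun y' => phiTR t R r y ^ 2 * (phiTR t R r y' ^ 2 * waveG (2*r) (y - y')) := by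
        funext y'; ring
      rw [heq, MeasureTheory.integral_const_mul]
      have hinner : (∫ y' : ℝ, phiTR t R r y' ^ 2 * waveG (2*r) (y - y')) ≤ 2*r*t^2 := by
        have hmono := MeasureTheory.integral_mono_of_nonneg
          (f := fun y' => phiTR t R r y' ^ 2 * waveG (2*r) (y - y'))
          (g := fun y' => t^2 * waveG (2*r) (y - y'))
          (Filter.Eventually.of_forall fun y' =>
            mul_nonneg (sq_nonneg _) (waveG_nonneg _ _))
          ((hGint y).const_mul (t^2))
          (Filter.Eventually.of_forall fun y' => by
            apply mul_le_mul_of_nonneg_right _ (waveG_nonneg _ _)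
            have h1 := hnn y'
            have h2 := hφt y'
            nlinarith)
        rw [MeasureTheory.integral_const_mul, hGval y] at hmono
        calc (∫ y' : ℝ, phiTR t R r y' ^ 2 * waveG (2*r) (y - y')) ≤ t^2 * (2*r) := hmono
          _ = 2*r*t^2 := by ring
      calc phiTR t R r y ^ 2 * (∫ y' : ℝ, phiTR t R r y' ^ 2 * waveG (2*r) (y - y'))
          ≤ phiTR t R r y ^ 2 * (2*r*t^2) := mul_le_mul_of_nonneg_left hinner (sq_nonneg _)
        _ = 2*r*t^2 * phiTR t R r y ^ 2 := by ring
    -- bound the outer integral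
    have h1 : (∫ y : ℝ, ∫ y' : ℝ, phiTR t R r y ^ 2 * phiTR t R r y' ^ 2 * waveG (2*r) (y - y'))
        ≤ 2*r*t^2 * ∫ y : ℝ, phiTR t R r y ^ 2 := by
      have hmono := MeasureTheory.integral_mono_of_nonneg
        (f := fun y => ∫ y' : ℝ, phiTR t R r y ^ 2 * phiTR t R r y' ^ 2 * waveG (2*r) (y - y'))
        (g := fun y => 2*r*t^2 * phiTR t R r y ^ 2)
        (Filter.Eventually.of_forall fun y =>
          integral_nonneg fun y' => mul_nonneg
            (mul_nonneg (sq_nonneg _) (sq_nonneg _)) (waveG_nonneg _ _))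
        (hint2.const_mul (2*r*t^2))
        (Filter.Eventually.of_forall key)
      rwa [MeasureTheory.integral_const_mul] at hmono
    -- ∫ φ² ≤ t ∫ φ
    have h2 : (∫ y : ℝ, phiTR t R r y ^ 2) ≤ t * ∫ y : ℝ, phiTR t R r y := by
      have hmono := MeasureTheory.integral_mono_of_nonneg
        (f := fun y => phiTR t R r y ^ 2)
        (g := fun y => t * phiTR t R r y)
        (Filter.Eventually.of_forall fun y => sq_nonneg _)
        (hint.const_mul t)
        (Filter.Eventually.of_forall fun y => by
          show phiTR t R r y ^ 2 ≤ t * phiTR t R r y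
          rw [pow_two]
          exact mul_le_mul_of_nonneg_right (hφt y) (hnn y))
      rwa [MeasureTheory.integral_const_mul] at hmono
    -- ∫ φ ≤ 4 R s
    have h4 : (∫ y : ℝ, phiTR t R r y) ≤ 4 * R * s := by
      have hg : Integrable ((Set.Icc (-(R+s)) (R+s)).indicator (fun _ => min s R)) := by
        apply MeasureTheory.IntegrableOn.integrable_indicator _ measurableSet_Icc
        refine MeasureTheory.integrableOn_const ?_
        rw [Real.volume_Icc]
        exact ENNReal.ofReal_ne_top
      have hmono := MeasureTheory.integral_mono_of_nonneg
        (f := fun y => phiTR t R r y)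
        (g := (Set.Icc (-(R+s)) (R+s)).indicator (fun _ => min s R))
        (Filter.Eventually.of_forall hnn) hg
        (Filter.Eventually.of_forall fun y => by
          by_cases hy : y ∈ Set.Icc (-(R+s)) (R+s)
          · rw [Set.indicator_of_mem hy]
            exact le_min (hφs y) (hφR y)
          · rw [Set.indicator_of_notMem hy]
            exact le_of_eq (hsupp y hy))
      rw [MeasureTheory.integral_indicator_const _ measurableSet_Icc, measureReal_def, Real.volume_Icc] at hmono
      have heq : R + s - (-(R+s)) = 2*(R+s) := by ring
      rw [heq, ENNReal.toReal_ofReal (by linarith), smul_eq_mul] at hmono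
      have hfin : 2*(R+s) * min s R ≤ 4 * R * s := by
        rcases le_total s R with h | h
        · rw [min_eq_left h]; nlinarith
        · rw [min_eq_right h]; nlinarith
      linarith
    have h3 : 0 ≤ ∫ y : ℝ, phiTR t R r y := integral_nonneg hnn
    have hrs : r * s ≤ t^2 / 4 := by
      have : s = t - r := hs
      nlinarith [sq_nonneg (t - 2*r)]
    calc (∫ y : ℝ, ∫ y' : ℝ, phiTR t R r y ^ 2 * phiTR t R r y' ^ 2 * waveG (2*r) (y - y'))
        ≤ 2*r*t^2 * ∫ y : ℝ, phiTR t R r y ^ 2 := h1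
      _ ≤ 2*r*t^2 * (t * ∫ y : ℝ, phiTR t R r y) :=
          mul_le_mul_of_nonneg_left h2 (by positivity)
      _ ≤ 2*r*t^2 * (t * (4 * R * s)) := by
          apply mul_le_mul_of_nonneg_left _ (by positivity)
          exact mul_le_mul_of_nonneg_left h4 ht.le
      _ ≤ 4 * t ^ 5 * R := by
          have h8 : (8*R*t^3) * (r*s) ≤ (8*R*t^3) * (t^2/4) :=
            mul_le_mul_of_nonneg_left hrs (by positivity)
          nlinarith [h8, mul_pos (pow_pos ht 5) hR]
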